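/- Let Ω = {(w,z) ∈ ℝ² : z ≥ w²} be the supergraph of a parabola, with Hilbert metric d_Ω. Fix a > 0 and for t ≥ 0 let p_t = (-a, a² + t) and q_t = (a, a² + t). Then d_Ω(p_t, q_t) = d_{K_t}(-a, a) where K_t = (-√(a²+t), √(a²+t)) ⊂ ℝ (the Hilbert metric of an interval), and consequently d_Ω(p_t, q_t) · √t → 2a as t → ∞, so the distance decays to 0 like t^{-1/2}. -/

import Mathlib

/-!
The chord through `p_t` and `q_t` is horizontal at height `h = a² + t`, and the affine
parametrisation `s ↦ -a + 2as` identifies it with the interval `(-√h, √h)`; cross-ratios are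
affine invariants, so `d_Ω(p_t, q_t) = d_{K_t}(-a, a)`. With `b = √h` this equals
`log ((b + a) / (b - a)) = 2 arsinh (a / √t)`, because `b² - a² = t`. Since `arsinh y ~ y` as
`y → 0`, multiplying by `√t` gives the limit `2a`.
-/

open Filter

/-- Hilbert "metric" of an interval `(α, β)` between points `x` and `y`:
`(1/2) log( ((β-x)(y-α)) / ((β-y)(x-α)) )`. -/
noncomputable def intervalHilbert (α β x y : ℝ) : ℝ :=
  (1/2) * Real.log (((β - x) * (y - α)) / ((β - y) * (x - α)))

/-- The supergraph of the parabola: `Ω = {(w,z) : z ≥ w²}`. -/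
def parabolaDomain : Set (ℝ × ℝ) := {p | p.1 ^ 2 ≤ p.2}

/-- Parameters `s` for which the point `(1-s)p + sq` of the chord through `p, q`
lies in the interior of the parabola domain. -/
def chordSet (p q : ℝ × ℝ) : Set ℝ :=
  {s | ((1 - s) • p + s • q) ∈ interior parabolaDomain}

open Classical in
/-- The Hilbert distance between `p` and `q` in the parabola domain, computed via the
cross-ratio along the chord through them (with the ray formula when the chord is a ray). -/
noncomputable def hilbertDist (p q : ℝ × ℝ) : ℝ :=
  if BddAbove (chordSet p q) then
    intervalHilbert (sInf (chordSet p q)) (sSup (chordSet p q)) 0 1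
  else (1/2) * Real.log ((1 - sInf (chordSet p q)) / (0 - sInf (chordSet p q)))


open Real Set Topology

lemma interior_setOf_le_snd {X : Type*} [TopologicalSpace X] {f : X → ℝ} (hf : Continuous f) :
    interior {p : X × ℝ | f p.1 ≤ p.2} = {p | f p.1 < p.2} := by
  refine subset_antisymm (fun p hp => ?_) (interior_maximal
    (ofPred_subset_ofPred.mpr fun _ => le_of_lt) (isOpen_lt (hf.comp continuous_fst) continuous_snd))
  have hslice : p.2 ∈ interior (Ici (f p.1)) :=
    preimage_interior_subset_interior_preimage (f := fun s : ℝ => (p.1, s)) (by fun_prop) hp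
  rwa [interior_Ici] at hslice

lemma interior_parabolaDomain : interior parabolaDomain = {p : ℝ × ℝ | p.1 ^ 2 < p.2} :=
  interior_setOf_le_snd (continuous_pow 2)

lemma chordSet_horizontal {x₁ x₂ h : ℝ} (hx : x₁ < x₂) :
    chordSet (x₁, h) (x₂, h) = Ioo ((-√h - x₁) / (x₂ - x₁)) ((√h - x₁) / (x₂ - x₁)) := by
  have hd : 0 < x₂ - x₁ := sub_pos.mpr hx
  ext s
  simp only [chordSet, interior_parabolaDomain, mem_ofPred_eq, Prod.smul_mk, smul_eq_mul,
    Prod.mk_add_mk]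
  rw [show (1 - s) * h + s * h = h by ring, Real.sq_lt, mem_Ioo, div_lt_iff₀ hd, lt_div_iff₀ hd]
  constructor <;> rintro ⟨h₁, h₂⟩ <;> constructor <;> linarith

lemma intervalHilbert_affine (α β x y : ℝ) {c : ℝ} (hc : c ≠ 0) (d : ℝ) :
    intervalHilbert (c * α + d) (c * β + d) (c * x + d) (c * y + d) = intervalHilbert α β x y := by
  have hsub : ∀ u v : ℝ, c * u + d - (c * v + d) = c * (u - v) := fun u v => by ring
  simp only [intervalHilbert, hsub, mul_mul_mul_comm c, mul_div_mul_left _ _ (mul_ne_zero hc hc)]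

lemma hilbertDist_horizontal {x₁ x₂ h : ℝ} (hx : x₁ < x₂) (hh : 0 < h) :
    hilbertDist (x₁, h) (x₂, h) = intervalHilbert (-√h) √h x₁ x₂ := by
  have hd : 0 < x₂ - x₁ := sub_pos.mpr hx
  have hlt : (-√h - x₁) / (x₂ - x₁) < (√h - x₁) / (x₂ - x₁) :=
    div_lt_div_of_pos_right (by linarith [Real.sqrt_pos.mpr hh]) hd
  rw [hilbertDist, chordSet_horizontal hx, if_pos bddAbove_Ioo, csInf_Ioo hlt, csSup_Ioo hlt,
    ← intervalHilbert_affine _ _ _ _ hd.ne' x₁]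
  congr 1 <;> field_simp <;> ring

lemma intervalHilbert_neg_neg_eq_arsinh {b x : ℝ} (hx : |x| < b) :
    intervalHilbert (-b) b (-x) x = 2 * arsinh (x / √(b ^ 2 - x ^ 2)) := by
  obtain ⟨hxb, hbx⟩ := abs_lt.mp hx
  have hb : 0 < b := (abs_nonneg x).trans_lt hx
  have hs : 0 < √(b ^ 2 - x ^ 2) := Real.sqrt_pos.mpr (by nlinarith)
  have hs2 : √(b ^ 2 - x ^ 2) ^ 2 = b ^ 2 - x ^ 2 := Real.sq_sqrt (by nlinarith)
  have hroot : √(1 + (x / √(b ^ 2 - x ^ 2)) ^ 2) = b / √(b ^ 2 - x ^ 2) := by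
    rw [Real.sqrt_eq_iff_mul_self_eq_of_pos (by positivity)]
    field_simp
    linarith
  have hratio : ((b - -x) * (x - -b)) / ((b - x) * (-x - -b)) =
      ((x / √(b ^ 2 - x ^ 2) + b / √(b ^ 2 - x ^ 2)) ^ 2) ^ 2 := by
    have hbx' : b - x ≠ 0 := by linarith
    have hxb' : x + b ≠ 0 := by linarith
    rw [← add_div, div_pow, hs2, show b ^ 2 - x ^ 2 = (b - x) * (x + b) by ring,
      show (x + b) ^ 2 / ((b - x) * (x + b)) = (x + b) / (b - x) by field_simp,
      div_pow, show -x - -b = b - x by ring]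
    ring
  rw [intervalHilbert, arsinh, hroot, hratio, Real.log_pow, Real.log_pow]
  push_cast
  ring

lemma tendsto_inv_mul_arsinh : Tendsto (fun y => y⁻¹ * arsinh y) (𝓝[≠] 0) (𝓝 1) := by
  simpa [arsinh_zero] using (hasDerivAt_arsinh 0).tendsto_slope_zero

lemma tendsto_div_sqrt_nhdsNE {a : ℝ} (ha : a ≠ 0) :
    Tendsto (fun t => a / √t) atTop (𝓝[≠] 0) := by
  refine tendsto_nhdsWithin_iff.mpr ⟨tendsto_const_nhds.div_atTop tendsto_sqrt_atTop, ?_⟩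
  filter_upwards [eventually_gt_atTop 0] with t ht
  exact div_ne_zero ha (Real.sqrt_pos.mpr ht).ne'

/-- For `p_t = (-a, a²+t)` and `q_t = (a, a²+t)` in the parabola domain,
`d_Ω(p_t, q_t) = d_{K_t}(-a, a)` where `K_t = (-√(a²+t), √(a²+t))`, and
`d_Ω(p_t, q_t) · √t → 2a` as `t → ∞`, so the distance decays like `t^{-1/2}`. -/
theorem parabola_hilbert_distance_decay (a : ℝ) (ha : 0 < a) :
    (∀ t : ℝ, 0 ≤ t →
      hilbertDist (-a, a ^ 2 + t) (a, a ^ 2 + t)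
        = intervalHilbert (-(Real.sqrt (a ^ 2 + t))) (Real.sqrt (a ^ 2 + t)) (-a) a) ∧
    Tendsto (fun t : ℝ => hilbertDist (-a, a ^ 2 + t) (a, a ^ 2 + t) * Real.sqrt t)
      atTop (nhds (2 * a)) := by
  have hdist : ∀ t : ℝ, 0 ≤ t → hilbertDist (-a, a ^ 2 + t) (a, a ^ 2 + t)
      = intervalHilbert (-√(a ^ 2 + t)) √(a ^ 2 + t) (-a) a :=
    fun t ht => hilbertDist_horizontal (by linarith) (by positivity)
  refine ⟨hdist, ?_⟩
  have hlim : Tendsto (fun t => 2 * a * ((a / √t)⁻¹ * arsinh (a / √t))) atTop (𝓝 (2 * a)) := by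
    simpa using (tendsto_inv_mul_arsinh.comp (tendsto_div_sqrt_nhdsNE ha.ne')).const_mul (2 * a)
  refine hlim.congr' ?_
  filter_upwards [eventually_gt_atTop 0] with t ht
  have hab : |a| < √(a ^ 2 + t) := by
    rw [abs_of_pos ha]; exact Real.lt_sqrt_of_sq_lt (by linarith)
  rw [hdist t ht.le, intervalHilbert_neg_neg_eq_arsinh hab, Real.sq_sqrt (by positivity),
    add_sub_cancel_left]
  field_simp [(Real.sqrt_pos.mpr ht).ne']
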